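/- Let G be a uniformly random tournament on n ≥ 3 labeled vertices and let a, s, b be three distinct vertices. Let A be the event that there is no directed path from a to s and B the event that there is no directed path from s to b. Then (1/2)^(2n-3)·(3 − 2·(1/2)^(n-3)) ≤ P(A ∩ B) ≤ (1/2)^(2n-3)·(3 + 20.8·(7/8)^(n-3)). -/

import Mathlib

/-- A tournament on `Fin n`: an orientation of each edge `{i,j}`, `i < j`, of the complete
graph. `ω ⟨(i,j),h⟩ = true` means the edge is oriented `i → j`. Each of the `2^(n choose 2)`
orientations is equally likely under the uniform probability `Pr`. -/
abbrev Orient (n : ℕ) : Type := {p : Fin n × Fin n // p.1 < p.2} → Bool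

/-- The edge between `i` and `j` is oriented from `i` to `j`. -/
def dir {n : ℕ} (ω : Orient n) (i j : Fin n) : Prop :=
  (∃ h : i < j, ω ⟨(i, j), h⟩ = true) ∨ (∃ h : j < i, ω ⟨(j, i), h⟩ = false)

/-- There is a directed path from `a` to `s` in the tournament `ω`. -/
def reaches {n : ℕ} (ω : Orient n) (a s : Fin n) : Prop :=
  Relation.TransGen (dir ω) a s

/-- The probability of the event `E` for a uniformly random tournament on `n` vertices. -/
noncomputable def Pr (n : ℕ) (E : Orient n → Prop) : ℝ :=
  haveI := Classical.decPred E
  ((Finset.univ.filter E).card : ℝ) / (Fintype.card (Orient n) : ℝ)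

/-!
Call a vertex set `S` absorbing if every edge between `S` and its complement points into `S`;
no directed path leaves an absorbing set. For a chain `S₁ ⊆ ⋯ ⊆ Sₖ`, all `Sᵢ` are absorbing iff
`∑ᵢ |Sᵢ \ Sᵢ₋₁| · |Sᵢᶜ|` distinct edges have prescribed orientations, which has probability
`2` to the minus that number.

Lower bound: "a is a sink and b a source", "a is a sink and s a sink of the rest" and "b is a
source and s a source of the rest" each prescribe `2n - 3` edges and rule out both paths. The
first meets each of the others in an event prescribing `3n - 6` edges, and for `n ≥ 4` the last
two are incompatible, so Bonferroni gives `3 · 2^(3-2n) - 2 · 2^(6-3n)`; for `n = 3` the first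
event alone suffices.

Upper bound: without the two paths, the sets `S` and `T` of vertices reachable from `a` and from
`s` (including `a`, `s`) are absorbing, with `a ∈ S ⊆ T`, `s ∈ T \ S` and `b ∉ T`. The union bound
over such pairs, grouped by `|S| = i + 1` and `|T| = j + 2`, is
`2^(3-2n) ∑ⱼ C(m,j) 2^(-j(m-j)) cutSum j` with `m = n - 3`. Since `cutSum 0 = 1` and
`cutSum j = 2 + properCutSum j ≤ 4` for `j > 0`, the sum is at most `3 + 5 properCutSum m`, and
`properCutSum m ≤ 4.16 (7/8)^m`.
-/
open Finset

variable {n : ℕ}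

abbrev Edge (n : ℕ) : Type := {p : Fin n × Fin n // p.1 < p.2}

section Tournament
variable {ω : Orient n} {u v : Fin n}

lemma dir_fst_snd_iff (e : Edge n) : dir ω e.1.1 e.1.2 ↔ ω e = true := by
  simp [dir, e.2, e.2.not_gt]

lemma dir_snd_fst_iff (e : Edge n) : dir ω e.1.2 e.1.1 ↔ ω e = false := by
  simp [dir, e.2, e.2.not_gt]

lemma dir_asymm (h : dir ω u v) : ¬ dir ω v u := by
  rcases lt_trichotomy u v with huv | rfl | hvu
  · rw [dir_fst_snd_iff ⟨(u, v), huv⟩] at h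
    simp [dir_snd_fst_iff ⟨(u, v), huv⟩, h]
  · simp [dir] at h
  · rw [dir_snd_fst_iff ⟨(v, u), hvu⟩] at h
    simp [dir_fst_snd_iff ⟨(v, u), hvu⟩, h]

lemma dir_or_dir_of_ne (h : u ≠ v) : dir ω u v ∨ dir ω v u := by
  rcases h.lt_or_gt with huv | hvu
  · rw [dir_fst_snd_iff ⟨(u, v), huv⟩, dir_snd_fst_iff ⟨(u, v), huv⟩]
    cases ω _ <;> simp
  · rw [dir_fst_snd_iff ⟨(v, u), hvu⟩, dir_snd_fst_iff ⟨(v, u), hvu⟩]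
    cases ω _ <;> simp

end Tournament

section Probability
variable {E F : Orient n → Prop}

lemma Pr_eq_card_div (E : Orient n → Prop) [DecidablePred E] :
    Pr n E = #(univ.filter E) / 2 ^ Fintype.card (Edge n) := by
  simp only [Pr, Fintype.card_fun, Fintype.card_bool, Nat.cast_pow, Nat.cast_ofNat]
  congr

lemma Pr_mono (h : ∀ ω, E ω → F ω) : Pr n E ≤ Pr n F := by
  classical
  rw [Pr_eq_card_div, Pr_eq_card_div]
  gcongr
  exact h _

lemma Pr_eq_zero (h : ∀ ω, ¬ E ω) : Pr n E = 0 := by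
  classical
  simp [Pr_eq_card_div, filter_false_of_mem fun ω _ => h ω]

lemma Pr_exists_le_sum {ι : Type*} (I : Finset ι) (E : ι → Orient n → Prop) :
    Pr n (fun ω => ∃ i ∈ I, E i ω) ≤ ∑ i ∈ I, Pr n (E i) := by
  classical
  simp only [Pr_eq_card_div, ← sum_div]
  gcongr
  calc (#(univ.filter fun ω => ∃ i ∈ I, E i ω) : ℝ)
      = #(I.biUnion fun i => univ.filter (E i)) := by
        congr 2; ext ω; simp
    _ ≤ ∑ i ∈ I, (#(univ.filter (E i)) : ℝ) := by exact_mod_cast card_biUnion_le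

lemma card_add_card_add_card_le {α : Type*} [DecidableEq α] (A B C : Finset α) :
    #A + #B + #C ≤ #(A ∪ B ∪ C) + #(A ∩ B) + #(A ∩ C) + #(B ∩ C) := by
  have hAB := card_union_add_card_inter A B
  have hABC := card_union_add_card_inter (A ∪ B) C
  have hcap : #((A ∪ B) ∩ C) ≤ #(A ∩ C) + #(B ∩ C) := by
    rw [union_inter_distrib_right]; exact card_union_le _ _
  omega

lemma Pr_add_add_le (E F G : Orient n → Prop) :
    Pr n E + Pr n F + Pr n G ≤ Pr n (fun ω => E ω ∨ F ω ∨ G ω) + Pr n (fun ω => E ω ∧ F ω)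
      + Pr n (fun ω => E ω ∧ G ω) + Pr n (fun ω => F ω ∧ G ω) := by
  classical
  simp only [Pr_eq_card_div, ← add_div, filter_or, filter_and, ← union_assoc]
  apply div_le_div_of_nonneg_right _ (by positivity)
  exact_mod_cast card_add_card_add_card_le _ _ _

end Probability

section Forces

def Forces (ω : Orient n) (P : Finset (Fin n × Fin n)) : Prop := ∀ p ∈ P, dir ω p.1 p.2

variable {P : Finset (Fin n × Fin n)} {p : Fin n × Fin n}

def forcedEdges (P : Finset (Fin n × Fin n)) : Finset (Edge n) :=
  univ.filter fun e => e.1 ∈ P ∨ e.1.swap ∈ P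

lemma fst_ne_snd_of_swap_notMem (hp : p ∈ P) (hswap : p.swap ∉ P) : p.1 ≠ p.2 :=
  fun h => hswap (by rwa [show p.swap = p from Prod.ext h.symm h])

lemma card_forcedEdges (hP : ∀ p ∈ P, p.swap ∉ P) : #(forcedEdges P) = #P := by
  refine card_bij (fun e _ => if e.1 ∈ P then e.1 else e.1.swap) ?_ ?_ ?_
  · intro e he
    simp only [forcedEdges, mem_filter, mem_univ, true_and] at he
    split_ifs with h
    · exact h
    · exact he.resolve_left h
  · intro e _ e' _ heq
    have := e.2; have := e'.2
    split_ifs at heq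
    all_goals first
      | exact Subtype.ext heq
      | exact Subtype.ext (Prod.swap_injective heq)
      | (simp only [Prod.ext_iff, Prod.fst_swap, Prod.snd_swap] at heq; omega)
  · intro p hp
    rcases (fst_ne_snd_of_swap_notMem hp (hP p hp)).lt_or_gt with hlt | hgt
    · exact ⟨⟨p, hlt⟩, by simp [forcedEdges, hp], by simp [hp]⟩
    · exact ⟨⟨p.swap, hgt⟩, by simp [forcedEdges, hp], by simp [hP p hp]⟩

lemma forces_iff {ω : Orient n} (hP : ∀ p ∈ P, p.swap ∉ P) :
    Forces ω P ↔ ∀ e ∈ forcedEdges P, ω e = decide (e.1 ∈ P) := by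
  simp only [forcedEdges, mem_filter, mem_univ, true_and]
  constructor
  · rintro h e (he | he)
    · simpa [he, ← dir_fst_snd_iff] using h _ he
    · have : e.1 ∉ P := by simpa using hP _ he
      simpa [this, ← dir_snd_fst_iff] using h _ he
  · intro h p hp
    rcases (fst_ne_snd_of_swap_notMem hp (hP p hp)).lt_or_gt with hlt | hgt
    · simpa [dir_fst_snd_iff ⟨p, hlt⟩, hp] using h ⟨p, hlt⟩
    · simpa [← dir_snd_fst_iff ⟨p.swap, hgt⟩, hp, hP p hp] using h ⟨p.swap, hgt⟩

theorem Pr_forces (hP : ∀ p ∈ P, p.swap ∉ P) : Pr n (Forces · P) = (1 / 2) ^ #P := by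
  classical
  set t : ∀ e : Edge n, Finset Bool := fun e =>
    if e ∈ forcedEdges P then {decide (e.1 ∈ P)} else univ
  have hevent : univ.filter (Forces · P) = Fintype.piFinset t := by
    ext ω
    simp only [mem_filter, mem_univ, true_and, forces_iff hP, Fintype.mem_piFinset, t]
    refine forall_congr' fun e => ?_
    split_ifs with he <;> simp [he]
  have hfactor : ∀ e, (#(t e) : ℝ) / 2 = if e ∈ forcedEdges P then 1 / 2 else 1 := by
    intro e; simp only [t]; split_ifs <;> simp
  rw [Pr_eq_card_div, hevent, Fintype.card_piFinset, Nat.cast_prod, ← card_univ, ← prod_const,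
    ← prod_div_distrib]
  simp only [hfactor, prod_ite_mem, univ_inter, prod_const, card_forcedEdges hP]

end Forces

section Absorbing
variable {ω : Orient n} {S T : Finset (Fin n)} {u v : Fin n}

def Absorbing (ω : Orient n) (S : Finset (Fin n)) : Prop := ∀ u ∈ S, ∀ v ∉ S, dir ω v u

lemma Absorbing.mem_of_reaches (hS : Absorbing ω S) (hu : u ∈ S) (h : reaches ω u v) :
    v ∈ S := by
  induction h with
  | single h => by_contra hv; exact dir_asymm h (hS _ hu _ hv)
  | tail _ h ih => by_contra hv; exact dir_asymm h (hS _ ih _ hv)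

lemma Absorbing.not_reaches (hS : Absorbing ω S) (hu : u ∈ S) (hv : v ∉ S) :
    ¬ reaches ω u v :=
  fun h => hv (hS.mem_of_reaches hu h)

lemma Absorbing.subset_or_subset (hS : Absorbing ω S) (hT : Absorbing ω T) :
    S ⊆ T ∨ T ⊆ S := by
  by_contra! h
  obtain ⟨u, huS, huT⟩ := not_subset.mp h.1
  obtain ⟨v, hvT, hvS⟩ := not_subset.mp h.2
  exact dir_asymm (hS u huS v hvS) (hT v hvT u huT)

open Classical in
noncomputable def reachClosure (ω : Orient n) (u : Fin n) : Finset (Fin n) :=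
  univ.filter fun v => v = u ∨ reaches ω u v

lemma mem_reachClosure : v ∈ reachClosure ω u ↔ v = u ∨ reaches ω u v := by
  simp [reachClosure]

lemma absorbing_reachClosure : Absorbing ω (reachClosure ω u) := by
  intro x hx y hy
  have hxy : y ≠ x := by rintro rfl; exact hy hx
  refine (dir_or_dir_of_ne hxy).resolve_right fun h => hy (mem_reachClosure.2 (Or.inr ?_))
  rcases mem_reachClosure.1 hx with rfl | hx
  · exact .single h
  · exact hx.tail h

end Absorbing

section Layers
variable {ω : Orient n} {B S : Finset (Fin n)} {L : List (Finset (Fin n))} {p : Fin n × Fin n}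

/-- For a chain `B = S₀ ⊆ S₁ ⊆ ⋯`, the pairs `(v, u)` with `u ∈ Sᵢ \ Sᵢ₋₁` and `v ∉ Sᵢ`: every
edge that must point into some `Sᵢ` for all of them to be absorbing, listed once. -/
def layerPairs : Finset (Fin n) → List (Finset (Fin n)) → Finset (Fin n × Fin n)
  | _, [] => ∅
  | B, S :: L => Sᶜ ×ˢ (S \ B) ∪ layerPairs S L

lemma mem_layerPairs_cons :
    p ∈ layerPairs B (S :: L) ↔ (p.1 ∉ S ∧ p.2 ∈ S ∧ p.2 ∉ B) ∨ p ∈ layerPairs S L := by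
  simp [layerPairs]

lemma exists_of_mem_layerPairs (hp : p ∈ layerPairs B L) : ∃ S ∈ L, p.1 ∉ S ∧ p.2 ∈ S := by
  induction L generalizing B with
  | nil => simp [layerPairs] at hp
  | cons S L ih =>
    rcases mem_layerPairs_cons.1 hp with ⟨h1, h2, -⟩ | hp
    · exact ⟨S, List.mem_cons_self, h1, h2⟩
    · obtain ⟨T, hT, h⟩ := ih hp
      exact ⟨T, List.mem_cons_of_mem _ hT, h⟩

lemma notMem_of_mem_layerPairs (hL : (B :: L).IsChain (· ⊆ ·)) (hp : p ∈ layerPairs B L) :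
    p.1 ∉ B ∧ p.2 ∉ B := by
  induction L generalizing B with
  | nil => simp [layerPairs] at hp
  | cons S L ih =>
    rw [List.isChain_cons_cons] at hL
    rcases mem_layerPairs_cons.1 hp with ⟨h1, -, h2⟩ | hp
    · exact ⟨fun h => h1 (hL.1 h), h2⟩
    · obtain ⟨h1, h2⟩ := ih hL.2 hp
      exact ⟨fun h => h1 (hL.1 h), fun h => h2 (hL.1 h)⟩

lemma swap_notMem_layerPairs (hL : (B :: L).IsChain (· ⊆ ·)) (hp : p ∈ layerPairs B L) :
    p.swap ∉ layerPairs B L := by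
  induction L generalizing B with
  | nil => simp [layerPairs] at hp
  | cons S L ih =>
    rw [List.isChain_cons_cons] at hL
    intro hq
    rcases mem_layerPairs_cons.1 hp with ⟨h1, h2, -⟩ | hp <;>
      rcases mem_layerPairs_cons.1 hq with ⟨h1', h2', -⟩ | hq
    · exact h1' h2
    · exact (notMem_of_mem_layerPairs hL.2 hq).1 h2
    · exact (notMem_of_mem_layerPairs hL.2 hp).1 h2'
    · exact ih hL.2 hp hq

lemma card_layerPairs_cons (hL : (B :: S :: L).IsChain (· ⊆ ·)) :
    #(layerPairs B (S :: L)) = (n - #S) * (#S - #B) + #(layerPairs S L) := by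
  rw [List.isChain_cons_cons] at hL
  rw [layerPairs, card_union_of_disjoint, card_product, card_compl, Fintype.card_fin,
    card_sdiff_of_subset hL.1]
  rw [disjoint_left]
  intro q hq hq'
  exact (notMem_of_mem_layerPairs hL.2 hq').2 (mem_sdiff.1 (mem_product.1 hq).2).1

lemma forces_layerPairs_iff (hL : (B :: L).IsChain (· ⊆ ·)) (hB : Absorbing ω B) :
    Forces ω (layerPairs B L) ↔ ∀ S ∈ L, Absorbing ω S := by
  refine ⟨fun hF => ?_, fun h q hq => ?_⟩
  · induction L generalizing B with
    | nil => simp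
    | cons S L ih =>
      rw [List.isChain_cons_cons] at hL
      have hS : Absorbing ω S := by
        intro u hu v hv
        by_cases huB : u ∈ B
        · exact hB u huB v fun h => hv (hL.1 h)
        · exact hF (v, u) (mem_layerPairs_cons.2 (Or.inl ⟨hv, hu, huB⟩))
      simp only [List.mem_cons, forall_eq_or_imp]
      exact ⟨hS, ih hL.2 hS fun q hq => hF q (mem_layerPairs_cons.2 (Or.inr hq))⟩
  · obtain ⟨S, hS, h1, h2⟩ := exists_of_mem_layerPairs hq
    exact h S hS _ h2 _ h1

theorem Pr_forall_absorbing (hL : (∅ :: L).IsChain (· ⊆ ·)) :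
    Pr n (fun ω => ∀ S ∈ L, Absorbing ω S) = (1 / 2) ^ #(layerPairs ∅ L) := by
  have hevent : (fun ω => ∀ S ∈ L, Absorbing ω S) = (Forces · (layerPairs ∅ L)) := by
    ext ω
    exact (forces_layerPairs_iff hL fun u hu => absurd hu (notMem_empty u)).symm
  rw [hevent, Pr_forces fun p hp => swap_notMem_layerPairs hL hp]

end Layers

section Chains
variable {S T U : Finset (Fin n)}

lemma Pr_absorbing_pair (hST : S ⊆ T) :
    Pr n (fun ω => ∀ C ∈ [S, T], Absorbing ω C)
      = (1 / 2) ^ ((n - #S) * #S + (n - #T) * (#T - #S)) := by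
  have hL : (∅ :: [S, T]).IsChain (· ⊆ ·) := by simp [hST]
  rw [Pr_forall_absorbing hL, card_layerPairs_cons hL, card_layerPairs_cons hL.tail]
  simp [layerPairs]

lemma Pr_absorbing_triple (hST : S ⊆ T) (hTU : T ⊆ U) :
    Pr n (fun ω => ∀ C ∈ [S, T, U], Absorbing ω C)
      = (1 / 2) ^ ((n - #S) * #S + (n - #T) * (#T - #S) + (n - #U) * (#U - #T)) := by
  have hL : (∅ :: [S, T, U]).IsChain (· ⊆ ·) := by simp [hST, hTU]
  rw [Pr_forall_absorbing hL, card_layerPairs_cons hL, card_layerPairs_cons hL.tail,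
    card_layerPairs_cons hL.tail.tail]
  simp [layerPairs, add_assoc]

end Chains

section LowerBound
variable {a s b : Fin n}

lemma card_compl_singleton_fin (b : Fin n) : #({b}ᶜ : Finset (Fin n)) = n - 1 := by
  rw [card_compl, Fintype.card_fin, card_singleton]

lemma card_compl_pair_fin (hsb : s ≠ b) : #({s, b}ᶜ : Finset (Fin n)) = n - 2 := by
  rw [card_compl, Fintype.card_fin, card_pair hsb]

lemma Pr_sink_and_source (hab : a ≠ b) :
    Pr n (fun ω => ∀ C ∈ [{a}, {b}ᶜ], Absorbing ω C) = (1 / 2) ^ (2 * n - 3) := by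
  rw [Pr_absorbing_pair (by simp [hab.symm]), card_compl_singleton_fin, card_singleton,
    Nat.sub_sub_self a.pos]
  congr 1; omega

lemma Pr_two_sinks (has : a ≠ s) :
    Pr n (fun ω => ∀ C ∈ [{a}, {a, s}], Absorbing ω C) = (1 / 2) ^ (2 * n - 3) := by
  rw [Pr_absorbing_pair (by simp), card_pair has, card_singleton]
  congr 1; omega

lemma Pr_two_sources (hsb : s ≠ b) :
    Pr n (fun ω => ∀ C ∈ [{s, b}ᶜ, {b}ᶜ], Absorbing ω C) = (1 / 2) ^ (2 * n - 3) := by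
  have hn : 2 ≤ n := by have := Fin.val_injective.ne hsb; omega
  rw [Pr_absorbing_pair (by simp), card_compl_singleton_fin, card_compl_pair_fin hsb,
    Nat.sub_sub_self b.pos, Nat.sub_sub_self hn]
  congr 1; omega

lemma not_reaches_of_absorbing_pair {ω : Orient n} {S T : Finset (Fin n)}
    (h : ∀ C ∈ [S, T], Absorbing ω C) (ha : a ∈ S) (hs : s ∉ S) (hs' : s ∈ T) (hb : b ∉ T) :
    ¬ reaches ω a s ∧ ¬ reaches ω s b := by
  simp only [List.mem_cons, List.not_mem_nil, or_false, forall_eq_or_imp, forall_eq] at h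
  exact ⟨h.1.not_reaches ha hs, h.2.not_reaches hs' hb⟩

lemma Pr_sink_and_source_and_two_sinks_le (has : a ≠ s) (hab : a ≠ b) (hsb : s ≠ b) :
    Pr n (fun ω => (∀ C ∈ [{a}, {b}ᶜ], Absorbing ω C) ∧ ∀ C ∈ [{a}, {a, s}], Absorbing ω C)
      ≤ (1 / 2) ^ (3 * n - 6) := by
  calc _ ≤ Pr n (fun ω => ∀ C ∈ [{a}, {a, s}, {b}ᶜ], Absorbing ω C) :=
        Pr_mono fun ω h => by simp_all
    _ = _ := by
        rw [Pr_absorbing_triple (by simp) (by simp [hab.symm, hsb.symm]),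
          card_compl_singleton_fin, card_pair has, card_singleton, Nat.sub_sub_self a.pos]
        congr 1; omega

lemma Pr_sink_and_source_and_two_sources_le (has : a ≠ s) (hab : a ≠ b) (hsb : s ≠ b) :
    Pr n (fun ω => (∀ C ∈ [{a}, {b}ᶜ], Absorbing ω C) ∧ ∀ C ∈ [{s, b}ᶜ, {b}ᶜ], Absorbing ω C)
      ≤ (1 / 2) ^ (3 * n - 6) := by
  have hn : 2 ≤ n := by have := Fin.val_injective.ne hsb; omega
  calc _ ≤ Pr n (fun ω => ∀ C ∈ [{a}, {s, b}ᶜ, {b}ᶜ], Absorbing ω C) :=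
        Pr_mono fun ω h => by simp_all
    _ = _ := by
        rw [Pr_absorbing_triple (by simp [has, hab]) (by simp), card_compl_singleton_fin,
          card_compl_pair_fin hsb, card_singleton, Nat.sub_sub_self a.pos, Nat.sub_sub_self hn]
        congr 1; omega

lemma not_absorbing_pair_and_compl_pair {ω : Orient n} (hn : 4 ≤ n) (has : a ≠ s) (hab : a ≠ b)
    (hsb : s ≠ b) : ¬ (Absorbing ω {a, s} ∧ Absorbing ω {s, b}ᶜ) := by
  obtain ⟨v, hv⟩ : ({a, s, b}ᶜ : Finset (Fin n)).Nonempty := by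
    rw [← card_pos, card_compl, Fintype.card_fin, card_insert_of_notMem (by simp [has, hab]),
      card_pair hsb]
    omega
  simp only [mem_compl, mem_insert, mem_singleton, not_or] at hv
  rintro ⟨h₂, h₃⟩
  rcases h₂.subset_or_subset h₃ with h | h
  · simpa using h (mem_insert_of_mem (mem_singleton_self s))
  · simpa [hv.1, hv.2.1] using h (show v ∈ ({s, b}ᶜ : Finset (Fin n)) by simp [hv.2.1, hv.2.2])

lemma le_Pr_not_reaches (hn : 3 ≤ n) (has : a ≠ s) (hab : a ≠ b) (hsb : s ≠ b) :
    (1 / 2 : ℝ) ^ (2 * n - 3) * (3 - 2 * (1 / 2) ^ (n - 3))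
      ≤ Pr n (fun ω => ¬ reaches ω a s ∧ ¬ reaches ω s b) := by
  have hsuff : ∀ ω, ((∀ C ∈ [{a}, {b}ᶜ], Absorbing ω C) ∨ (∀ C ∈ [{a}, {a, s}], Absorbing ω C)
      ∨ ∀ C ∈ [{s, b}ᶜ, {b}ᶜ], Absorbing ω C) → ¬ reaches ω a s ∧ ¬ reaches ω s b := by
    rintro ω (h | h | h)
    · exact not_reaches_of_absorbing_pair h (by simp) (by simp [has.symm]) (by simp [hsb]) (by simp)
    · exact not_reaches_of_absorbing_pair h (by simp) (by simp [has.symm]) (by simp)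
        (by simp [hab.symm, hsb.symm])
    · exact not_reaches_of_absorbing_pair h (by simp [has, hab]) (by simp) (by simp [hsb])
        (by simp)
  rcases hn.eq_or_lt with rfl | hn
  · calc (1 / 2 : ℝ) ^ (2 * 3 - 3) * (3 - 2 * (1 / 2) ^ (3 - 3))
        = Pr 3 (fun ω => ∀ C ∈ [{a}, {b}ᶜ], Absorbing ω C) := by
          rw [Pr_sink_and_source hab]; norm_num
      _ ≤ _ := Pr_mono fun ω h => hsuff ω (Or.inl h)
  have hdisjoint : Pr n (fun ω => (∀ C ∈ [{a}, {a, s}], Absorbing ω C) ∧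
      ∀ C ∈ [{s, b}ᶜ, {b}ᶜ], Absorbing ω C) = 0 :=
    Pr_eq_zero fun ω h => not_absorbing_pair_and_compl_pair hn has hab hsb
      ⟨h.1 _ (by simp), h.2 _ (by simp)⟩
  have hpow : (1 / 2 : ℝ) ^ (2 * n - 3) * (1 / 2) ^ (n - 3) = (1 / 2) ^ (3 * n - 6) := by
    rw [← pow_add]; congr 1; omega
  have hbonferroni := Pr_add_add_le (fun ω => ∀ C ∈ [{a}, {b}ᶜ], Absorbing ω C)
    (fun ω => ∀ C ∈ [{a}, {a, s}], Absorbing ω C) (fun ω => ∀ C ∈ [{s, b}ᶜ, {b}ᶜ], Absorbing ω C)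
  rw [Pr_sink_and_source hab, Pr_two_sinks has, Pr_two_sources hsb, hdisjoint] at hbonferroni
  linarith [Pr_mono hsuff, Pr_sink_and_source_and_two_sinks_le has hab hsb,
    Pr_sink_and_source_and_two_sources_le has hab hsb]

end LowerBound

section UpperBound
variable {a s b : Fin n}

lemma exists_absorbing_of_not_reaches {ω : Orient n} (has : a ≠ s) (hsb : s ≠ b)
    (h : ¬ reaches ω a s ∧ ¬ reaches ω s b) :
    ∃ q ∈ ({a, s, b}ᶜ : Finset (Fin n)).powerset.sigma powerset,
      ∀ C ∈ [insert a q.2, insert a (insert s q.1)], Absorbing ω C := by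
  set S := reachClosure ω a
  set T := reachClosure ω s
  have hS : Absorbing ω S := absorbing_reachClosure
  have hT : Absorbing ω T := absorbing_reachClosure
  have haS : a ∈ S := mem_reachClosure.2 (Or.inl rfl)
  have hsT : s ∈ T := mem_reachClosure.2 (Or.inl rfl)
  have hsS : s ∉ S := by simp [S, mem_reachClosure, has.symm, h.1]
  have hbT : b ∉ T := by simp [T, mem_reachClosure, hsb.symm, h.2]
  have hST : S ⊆ T := (hS.subset_or_subset hT).resolve_right fun h => hsS (h hsT)
  refine ⟨⟨(T.erase a).erase s, S.erase a⟩, ?_, ?_⟩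
  · simp only [mem_sigma, mem_powerset]
    constructor
    · intro v hv
      simp only [mem_erase] at hv
      simp only [mem_compl, mem_insert, mem_singleton, not_or]
      exact ⟨hv.2.1, hv.1, fun h => hbT (h ▸ hv.2.2)⟩
    · intro v hv
      simp only [mem_erase] at hv ⊢
      exact ⟨fun h => hsS (h ▸ hv.2), hv.1, hST hv.2⟩
  · have haT : a ∈ T := hST haS
    simp only [List.mem_cons, List.not_mem_nil, or_false, forall_eq_or_imp, forall_eq]
    rw [insert_erase haS, insert_erase (mem_erase.2 ⟨fun h => has h.symm, hsT⟩),
      insert_erase haT]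
    exact ⟨hS, hT⟩

lemma Pr_not_reaches_le_sum (has : a ≠ s) (hab : a ≠ b) (hsb : s ≠ b) :
    Pr n (fun ω => ¬ reaches ω a s ∧ ¬ reaches ω s b)
      ≤ ∑ j ∈ range (n - 3 + 1), (n - 3).choose j • ∑ i ∈ range (j + 1), j.choose i •
          (1 / 2 : ℝ) ^ ((n - (i + 1)) * (i + 1) + (n - (j + 2)) * (j + 2 - (i + 1))) := by
  set X : Finset (Fin n) := {a, s, b}ᶜ
  have hX : #X = n - 3 := by
    rw [card_compl, Fintype.card_fin, card_insert_of_notMem (by simp [has, hab]),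
      card_pair hsb]
  calc Pr n (fun ω => ¬ reaches ω a s ∧ ¬ reaches ω s b)
      ≤ Pr n (fun ω => ∃ q ∈ X.powerset.sigma powerset,
          ∀ C ∈ [insert a q.2, insert a (insert s q.1)], Absorbing ω C) :=
        Pr_mono fun ω h => exists_absorbing_of_not_reaches has hsb h
    _ ≤ ∑ q ∈ X.powerset.sigma powerset,
          Pr n (fun ω => ∀ C ∈ [insert a q.2, insert a (insert s q.1)], Absorbing ω C) :=
        Pr_exists_le_sum _ _
    _ = ∑ q ∈ X.powerset.sigma powerset, (1 / 2 : ℝ) ^ ((n - (#q.2 + 1)) * (#q.2 + 1)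
          + (n - (#q.1 + 2)) * (#q.1 + 2 - (#q.2 + 1))) := by
        refine sum_congr rfl fun q hq => ?_
        simp only [mem_sigma, mem_powerset, X] at hq
        have hq1 : a ∉ q.1 ∧ s ∉ q.1 := by
          constructor <;> intro h <;> simpa using hq.1 h
        have hsub : insert a q.2 ⊆ insert a (insert s q.1) :=
          insert_subset_insert _ (hq.2.trans (subset_insert _ _))
        rw [Pr_absorbing_pair hsub, card_insert_of_notMem fun h => hq1.1 (hq.2 h),
          card_insert_of_notMem (by simp [has, hq1.1]), card_insert_of_notMem hq1.2]
    _ = _ := by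
        set g : ℕ → ℕ → ℝ := fun i j =>
          (1 / 2 : ℝ) ^ ((n - (i + 1)) * (i + 1) + (n - (j + 2)) * (j + 2 - (i + 1)))
        rw [sum_sigma, ← hX]
        calc ∑ T ∈ X.powerset, ∑ S ∈ T.powerset, g #S #T
            = ∑ T ∈ X.powerset, ∑ i ∈ range (#T + 1), (#T).choose i • g i #T :=
              sum_congr rfl fun T _ => sum_powerset_apply_card fun i => g i #T
          _ = _ := sum_powerset_apply_card fun j => ∑ i ∈ range (j + 1), j.choose i • g i j

end UpperBound

section CutSums

noncomputable def cutSum (m : ℕ) : ℝ :=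
  ∑ i ∈ range (m + 1), (m.choose i : ℝ) * (1 / 2) ^ (i * (m - i))

noncomputable def properCutSum (m : ℕ) : ℝ :=
  ∑ i ∈ Ico 1 m, (m.choose i : ℝ) * (1 / 2) ^ (i * (m - i))

lemma sum_range_succ_eq_first_add_sum_Ico_add_last {M : Type*} [AddCommMonoid M] (f : ℕ → M)
    {m : ℕ} (hm : 0 < m) : ∑ i ∈ range (m + 1), f i = f 0 + ∑ i ∈ Ico 1 m, f i + f m := by
  rw [sum_range_succ, range_eq_Ico, sum_eq_sum_Ico_succ_bot hm]

lemma cutSum_eq {m : ℕ} (hm : 0 < m) : cutSum m = 2 + properCutSum m := by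
  rw [cutSum, sum_range_succ_eq_first_add_sum_Ico_add_last _ hm, properCutSum]
  simp only [Nat.choose_zero_right, Nat.choose_self, zero_mul, Nat.sub_self, mul_zero, pow_zero]
  ring

lemma sum_choose_le (m : ℕ) (s : Finset ℕ) : ∑ i ∈ s, (m.choose i : ℝ) ≤ 2 ^ m := by
  have h : ∑ i ∈ s, m.choose i ≤ ∑ i ∈ range (m + 1), m.choose i :=
    sum_le_sum_of_ne_zero fun i _ hi =>
      mem_range.2 (Nat.lt_succ_of_le (not_lt.1 fun h => hi (Nat.choose_eq_zero_of_lt h)))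
  rw [Nat.sum_range_choose] at h
  exact_mod_cast h

lemma sum_choose_mul_half_pow_le {m k : ℕ} {s : Finset ℕ} (hk : ∀ i ∈ s, k ≤ i * (m - i)) :
    ∑ i ∈ s, (m.choose i : ℝ) * (1 / 2) ^ (i * (m - i)) ≤ 2 ^ m * (1 / 2) ^ k := by
  calc ∑ i ∈ s, (m.choose i : ℝ) * (1 / 2) ^ (i * (m - i))
      ≤ ∑ i ∈ s, (m.choose i : ℝ) * (1 / 2) ^ k := by
        refine sum_le_sum fun i hi => mul_le_mul_of_nonneg_left ?_ (by positivity)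
        exact pow_le_pow_of_le_one (by norm_num) (by norm_num) (hk i hi)
    _ ≤ 2 ^ m * (1 / 2) ^ k := by
        rw [← sum_mul]; gcongr; exact sum_choose_le m s

lemma mul_sub_le_mul_sub {a i m : ℕ} (h1 : a ≤ i) (h2 : i + a ≤ m) :
    a * (m - a) ≤ i * (m - i) := by
  obtain ⟨p, rfl⟩ := Nat.exists_eq_add_of_le h1
  obtain ⟨q, rfl⟩ := Nat.exists_eq_add_of_le h2
  rw [show a + p + a + q - a = a + p + q by omega, show a + p + a + q - (a + p) = a + q by omega]
  nlinarith [Nat.zero_le (p * q)]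

lemma properCutSum_le_two (m : ℕ) : properCutSum m ≤ 2 := by
  rcases Nat.eq_zero_or_pos m with rfl | hm
  · simp [properCutSum]
  calc properCutSum m ≤ 2 ^ m * (1 / 2) ^ (m - 1) := by
        refine sum_choose_mul_half_pow_le fun i hi => ?_
        simp only [mem_Ico] at hi
        simpa using mul_sub_le_mul_sub hi.1 (by omega : i + 1 ≤ m)
    _ = 2 := by
        obtain ⟨k, rfl⟩ := Nat.exists_eq_add_of_lt hm
        rw [zero_add, Nat.add_sub_cancel, one_div, inv_pow, pow_succ]
        field_simp

lemma cutSum_le_four (m : ℕ) : cutSum m ≤ 4 := by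
  rcases Nat.eq_zero_or_pos m with rfl | hm
  · norm_num [cutSum]
  · linarith [cutSum_eq hm, properCutSum_le_two m]

lemma properCutSum_le_of_four_le {m : ℕ} (hm : 4 ≤ m) :
    properCutSum m ≤ (4 * m + 16) * (1 / 2) ^ m := by
  obtain ⟨k, rfl⟩ := Nat.exists_eq_add_of_le' hm
  have hmiddle : ∑ i ∈ Ico 2 (k + 3), ((k + 4).choose i : ℝ) * (1 / 2) ^ (i * (k + 4 - i))
      ≤ 2 ^ (k + 4) * (1 / 2) ^ (2 * (k + 2)) := by
    refine sum_choose_mul_half_pow_le fun i hi => ?_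
    simp only [mem_Ico] at hi
    simpa using mul_sub_le_mul_sub hi.1 (by omega : i + 2 ≤ k + 4)
  have hfirst : ((k + 4).choose 1 : ℝ) * (1 / 2) ^ (1 * (k + 4 - 1))
      = 2 * (k + 4) * (1 / 2) ^ (k + 4) := by
    simp only [Nat.choose_one_right, one_mul, show k + 4 - 1 = k + 3 by omega, pow_succ]
    push_cast; ring
  have hlast : ((k + 4).choose (k + 3) : ℝ) * (1 / 2) ^ ((k + 3) * (k + 4 - (k + 3)))
      = 2 * (k + 4) * (1 / 2) ^ (k + 4) := by
    rw [show k + 4 = k + 3 + 1 by rfl, Nat.choose_succ_self_right, Nat.add_sub_cancel_left,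
      mul_one, pow_succ]
    push_cast; ring
  have hmiddle' : (2 : ℝ) ^ (k + 4) * (1 / 2) ^ (2 * (k + 2)) = 16 * (1 / 2) ^ (k + 4) := by
    rw [one_div_pow, one_div_pow, show 2 * (k + 2) = k + k + 4 by ring]
    field_simp
    ring
  rw [properCutSum, sum_eq_sum_Ico_succ_bot (by omega), show k + 4 = k + 3 + 1 by rfl,
    sum_Ico_succ_top (by omega)]
  simp only [show k + 3 + 1 = k + 4 by ring, Nat.reduceAdd, hfirst, hlast]
  push_cast
  linarith

lemma four_mul_add_sixteen_mul_half_pow_le {m : ℕ} (hm : 4 ≤ m) :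
    (4 * m + 16 : ℝ) * (1 / 2) ^ m ≤ 4.16 * (7 / 8) ^ m := by
  induction m, hm using Nat.le_induction with
  | base => norm_num
  | succ m hm ih =>
    have hpos : (0 : ℝ) < (1 / 2) ^ m := by positivity
    push_cast at ih ⊢
    rw [pow_succ, pow_succ]
    nlinarith

lemma properCutSum_le (m : ℕ) : properCutSum m ≤ 4.16 * (7 / 8) ^ m := by
  rcases lt_or_ge m 4 with hm | hm
  · interval_cases m <;> norm_num [properCutSum, sum_Ico_succ_top]
  · exact (properCutSum_le_of_four_le hm).trans (four_mul_add_sixteen_mul_half_pow_le hm)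

end CutSums

section LayerSum

lemma sum_choose_mul_cutSum_le (m : ℕ) :
    ∑ j ∈ range (m + 1), (m.choose j : ℝ) * (1 / 2) ^ (j * (m - j)) * cutSum j
      ≤ 3 + 20.8 * (7 / 8) ^ m := by
  rcases Nat.eq_zero_or_pos m with rfl | hm
  · norm_num [cutSum]
  have hmiddle : ∑ j ∈ Ico 1 m, (m.choose j : ℝ) * (1 / 2) ^ (j * (m - j)) * cutSum j
      ≤ 4 * properCutSum m := by
    rw [properCutSum, mul_sum]
    refine sum_le_sum fun j _ => ?_
    rw [mul_comm 4]
    exact mul_le_mul_of_nonneg_left (cutSum_le_four j) (by positivity)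
  have hzero : cutSum 0 = 1 := by norm_num [cutSum]
  rw [sum_range_succ_eq_first_add_sum_Ico_add_last _ hm, cutSum_eq hm, hzero]
  norm_num
  linarith [properCutSum_le m]

lemma layer_exponent_eq {i j m : ℕ} (hij : i ≤ j) (hjm : j ≤ m) :
    (m + 3 - (i + 1)) * (i + 1) + (m + 3 - (j + 2)) * (j + 2 - (i + 1))
      = 2 * m + 3 + j * (m - j) + i * (j - i) := by
  obtain ⟨p, rfl⟩ := Nat.exists_eq_add_of_le hij
  obtain ⟨q, rfl⟩ := Nat.exists_eq_add_of_le hjm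
  rw [show i + p + q + 3 - (i + 1) = p + q + 2 by omega,
    show i + p + q + 3 - (i + p + 2) = q + 1 by omega, show i + p + 2 - (i + 1) = p + 1 by omega,
    show i + p + q - (i + p) = q by omega, Nat.add_sub_cancel_left]
  ring

lemma sum_layer_weights_le (m : ℕ) :
    ∑ j ∈ range (m + 1), m.choose j • ∑ i ∈ range (j + 1), j.choose i •
        (1 / 2 : ℝ) ^ ((m + 3 - (i + 1)) * (i + 1) + (m + 3 - (j + 2)) * (j + 2 - (i + 1)))
      ≤ (1 / 2) ^ (2 * m + 3) * (3 + 20.8 * (7 / 8) ^ m) := by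
  have hterm : ∀ j ∈ range (m + 1), m.choose j • ∑ i ∈ range (j + 1), j.choose i •
        (1 / 2 : ℝ) ^ ((m + 3 - (i + 1)) * (i + 1) + (m + 3 - (j + 2)) * (j + 2 - (i + 1)))
      = (1 / 2) ^ (2 * m + 3) * ((m.choose j : ℝ) * (1 / 2) ^ (j * (m - j)) * cutSum j) := by
    intro j hj
    rw [cutSum, nsmul_eq_mul, mul_sum, mul_sum, mul_sum]
    refine sum_congr rfl fun i hi => ?_
    rw [nsmul_eq_mul, layer_exponent_eq (by simpa [Nat.lt_succ_iff] using hi)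
      (by simpa [Nat.lt_succ_iff] using hj), pow_add, pow_add, pow_add]
    ring
  rw [sum_congr rfl hterm, ← mul_sum]
  exact mul_le_mul_of_nonneg_left (sum_choose_mul_cutSum_le m) (by positivity)

end LayerSum

theorem joint_no_path_prob_bounds (n : ℕ) (hn : 3 ≤ n) (a s b : Fin n)
    (has : a ≠ s) (hab : a ≠ b) (hsb : s ≠ b) :
    ((1 : ℝ) / 2) ^ (2 * n - 3) * (3 - 2 * (1 / 2) ^ (n - 3)) ≤
        Pr n (fun ω => ¬ reaches ω a s ∧ ¬ reaches ω s b) ∧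
      Pr n (fun ω => ¬ reaches ω a s ∧ ¬ reaches ω s b) ≤
        ((1 : ℝ) / 2) ^ (2 * n - 3) * (3 + 20.8 * (7 / 8) ^ (n - 3)) := by
  refine ⟨le_Pr_not_reaches hn has hab hsb, (Pr_not_reaches_le_sum has hab hsb).trans ?_⟩
  obtain ⟨m, rfl⟩ := Nat.exists_eq_add_of_le' hn
  rw [Nat.add_sub_cancel, show 2 * (m + 3) - 3 = 2 * m + 3 by omega]
  exact sum_layer_weights_le m
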